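/- The function ψ(t) = (64/35)t^{1/2} - 2t² + (8/5)t³ - (3/7)t⁴ is concave on [0,1]. -/

import Mathlib

noncomputable def psi : ℝ → ℝ :=
  fun t => 64 / 35 * Real.sqrt t - 2 * t ^ 2 + 8 / 5 * t ^ 3 - 3 / 7 * t ^ 4

noncomputable def psi' : ℝ → ℝ :=
  fun t => 32 / 35 * (Real.sqrt t)⁻¹ - 4 * t + 24 / 5 * t ^ 2 - 12 / 7 * t ^ 3

noncomputable def psi'' : ℝ → ℝ :=
  fun t => -(16 / 35) * (t * Real.sqrt t)⁻¹ - 4 + 48 / 5 * t - 36 / 7 * t ^ 2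

lemma hasDerivAt_psi {x : ℝ} (hx : 0 < x) : HasDerivAt psi (psi' x) x := by
  have hs := Real.hasDerivAt_sqrt hx.ne'
  have h : HasDerivAt psi (64 / 35 * (1 / (2 * Real.sqrt x)) - 2 * (2 * x ^ 1)
      + 8 / 5 * (3 * x ^ 2) - 3 / 7 * (4 * x ^ 3)) x := by
    exact ((((hs.const_mul (64/35 : ℝ)).sub ((hasDerivAt_pow 2 x).const_mul 2)).add
      ((hasDerivAt_pow 3 x).const_mul (8/5))).sub ((hasDerivAt_pow 4 x).const_mul (3/7)))
  convert h using 1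
  have : Real.sqrt x ≠ 0 := by positivity
  simp only [psi']
  field_simp
  ring

lemma hasDerivAt_psi' {x : ℝ} (hx : 0 < x) : HasDerivAt psi' (psi'' x) x := by
  have hsne : Real.sqrt x ≠ 0 := by positivity
  have hs := Real.hasDerivAt_sqrt hx.ne'
  have hinv : HasDerivAt (fun t => (Real.sqrt t)⁻¹)
      (-(1 / (2 * Real.sqrt x)) / (Real.sqrt x) ^ 2) x := hs.inv hsne
  have h : HasDerivAt psi' (32 / 35 * (-(1 / (2 * Real.sqrt x)) / (Real.sqrt x) ^ 2)
      - 4 * 1 + 24 / 5 * (2 * x ^ 1) - 12 / 7 * (3 * x ^ 2)) x := by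
    exact (((hinv.const_mul (32/35 : ℝ)).sub ((hasDerivAt_id x).const_mul 4)).add
      ((hasDerivAt_pow 2 x).const_mul (24/5))).sub ((hasDerivAt_pow 3 x).const_mul (12/7))
  convert h using 1
  have hsq : Real.sqrt x ^ 2 = x := Real.sq_sqrt hx.le
  simp only [psi'']
  field_simp
  nlinarith [hsq, Real.sqrt_nonneg x, hx]

lemma psi''_nonpos {x : ℝ} (hx : x ∈ Set.Ioo (0:ℝ) 1) : psi'' x ≤ 0 := by
  obtain ⟨hx0, hx1⟩ := hx
  set s := Real.sqrt x with hs
  have hs0 : 0 < s := Real.sqrt_pos.mpr hx0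
  have hs1 : s ≤ 1 := by
    rw [hs, show (1:ℝ) = Real.sqrt 1 by simp]
    exact Real.sqrt_le_sqrt hx1.le
  have hsq : s ^ 2 = x := Real.sq_sqrt hx0.le
  rw [psi'', ← hsq, Real.sqrt_sq hs0.le]
  have h : -(16 / 35) * (s ^ 2 * s)⁻¹ - 4 + 48 / 5 * s ^ 2 - 36 / 7 * (s ^ 2) ^ 2
      = (-(16/35) - 4 * (s^2*s) + 48/5 * s^2 * (s^2*s) - 36/7 * (s^2)^2 * (s^2*s))
        / (s ^ 2 * s) := by
    field_simp
  rw [h]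
  apply div_nonpos_of_nonpos_of_nonneg
  · nlinarith [mul_nonneg (sq_nonneg (1 - s))
      (by positivity : (0:ℝ) ≤ 180 * s^5 + 360 * s^4 + 204 * s^3 + 48 * s^2 + 32 * s + 16)]
  · positivity

theorem psi_concave : ConcaveOn ℝ (Set.Icc (0 : ℝ) 1) psi := by
  have hint : interior (Set.Icc (0:ℝ) 1) = Set.Ioo 0 1 := interior_Icc
  apply concaveOn_of_hasDerivWithinAt2_nonpos (f' := psi') (f'' := psi'') (convex_Icc 0 1)
  · exact Continuous.continuousOn (by unfold psi; fun_prop)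
  · intro x hx
    rw [hint] at hx
    exact (hasDerivAt_psi hx.1).hasDerivWithinAt
  · intro x hx
    rw [hint] at hx
    exact (hasDerivAt_psi' hx.1).hasDerivWithinAt
  · intro x hx
    rw [hint] at hx
    exact psi''_nonpos hx
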